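/- Let d ≥ 1, ε, μ, L, R > 0, and α ≥ 0. Let F : ℝ^d → ℝ be μ-strongly convex on ℝ^d and L-Lipschitz on B(0,R), with unique global minimizer w* ∈ B(0,R). Let w_T ∈ B(0,R) satisfy F(w_T) − F(w*) ≤ α. Set Δ̂ = 2L/μ + 2√(2α/μ), let ν be the probability measure on ℝ^d whose density with respect to Lebesgue measure is proportional to exp(−(ε/Δ̂)‖t‖₂), and let Π_{B(0,R)} denote the Euclidean projection onto B(0,R). Then ∫_{ℝ^d} F(Π_{B(0,R)}(w_T + z)) dν(z) − F(w*) ≤ 2√2·(L²/μ + L·√(2α/μ))·(d/ε) + α. -/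

import Mathlib

open MeasureTheory

/-- Euclidean projection onto the closed ball `B(0,R)`:
`Π(u) = u` if `‖u‖ ≤ R`, and `Π(u) = (R/‖u‖)·u` otherwise. -/
noncomputable def projBall {d : ℕ} (R : ℝ) (u : EuclideanSpace ℝ (Fin d)) :
    EuclideanSpace ℝ (Fin d) :=
  if ‖u‖ ≤ R then u else (R / ‖u‖) • u

lemma projBall_norm_le {d : ℕ} {R : ℝ} (hR : 0 ≤ R) (u : EuclideanSpace ℝ (Fin d)) :
    ‖projBall R u‖ ≤ R := by
  unfold projBall
  split_ifs with h
  · exact h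
  · push_neg at h
    have hu : 0 < ‖u‖ := hR.trans_lt h
    rw [norm_smul, Real.norm_eq_abs, abs_div, abs_of_nonneg hR,
      abs_of_nonneg (norm_nonneg u), div_mul_cancel₀ _ hu.ne']

lemma projBall_dist_le {d : ℕ} {R : ℝ} (hR : 0 ≤ R) (u w : EuclideanSpace ℝ (Fin d))
    (hw : ‖w‖ ≤ R) : ‖projBall R u - w‖ ≤ ‖u - w‖ := by
  unfold projBall
  split_ifs with h
  · exact le_rfl
  · push_neg at h
    have hu : 0 < ‖u‖ := hR.trans_lt h
    set t : ℝ := R / ‖u‖ with ht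
    have ht0 : 0 ≤ t := div_nonneg hR (norm_nonneg u)
    have ht1 : t ≤ 1 := (div_le_one hu).2 h.le
    have htu : t * ‖u‖ = R := div_mul_cancel₀ _ hu.ne'
    have hiuw : (inner ℝ u w : ℝ) ≤ ‖u‖ * ‖w‖ := real_inner_le_norm u w
    have e1 : ‖t • u - w‖ ^ 2 = t ^ 2 * ‖u‖ ^ 2 - 2 * (t * (inner ℝ u w : ℝ)) + ‖w‖ ^ 2 := by
      rw [norm_sub_sq_real, real_inner_smul_left, norm_smul, Real.norm_eq_abs,
        abs_of_nonneg ht0, mul_pow]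
    have e2 : ‖u - w‖ ^ 2 = ‖u‖ ^ 2 - 2 * (inner ℝ u w : ℝ) + ‖w‖ ^ 2 := by
      rw [norm_sub_sq_real]
    have hsq : ‖t • u - w‖ ^ 2 ≤ ‖u - w‖ ^ 2 := by
      nlinarith [mul_le_mul_of_nonneg_left hiuw (sub_nonneg.2 ht1),
        mul_le_mul_of_nonneg_left hw (mul_nonneg (sub_nonneg.2 ht1) (norm_nonneg u)),
        sq_nonneg (1 - t), sq_nonneg ‖u‖, norm_nonneg u]
    nlinarith [norm_nonneg (t • u - w), norm_nonneg (u - w)]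

lemma measurable_projBall {d : ℕ} {R : ℝ} : Measurable (projBall (d := d) R) := by
  unfold projBall
  exact Measurable.ite (measurableSet_le measurable_norm measurable_const)
    measurable_id ((measurable_const.div measurable_norm).smul measurable_id)

set_option maxHeartbeats 1000000 in
/-- The black-box output-perturbation algorithm applied to an `α`-suboptimal
point `w_T` of a `μ`-strongly convex, `L`-Lipschitz-on-`B(0,R)` objective, with noise scale
`Δ̂ = 2L/μ + 2√(2α/μ)`, has excess risk at most
`2√2·(L²/μ + L√(2α/μ))·(d/ε) + α`. -/
theorem stmt_13 (d : ℕ) (hd : 1 ≤ d) (ε μ L R α : ℝ)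
    (hε : 0 < ε) (hμ : 0 < μ) (hL : 0 < L) (hR : 0 < R) (hα : 0 ≤ α)
    (F : EuclideanSpace ℝ (Fin d) → ℝ)
    (hsconv : ConvexOn ℝ Set.univ (fun w => F w - μ / 2 * ‖w‖ ^ 2))
    (hLip : ∀ w ∈ Metric.closedBall (0 : EuclideanSpace ℝ (Fin d)) R,
      ∀ w' ∈ Metric.closedBall (0 : EuclideanSpace ℝ (Fin d)) R,
      |F w - F w'| ≤ L * ‖w - w'‖)
    (wstar : EuclideanSpace ℝ (Fin d))
    (hmin : ∀ w, F wstar ≤ F w) (hwsB : ‖wstar‖ ≤ R)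
    (wT : EuclideanSpace ℝ (Fin d)) (hwTB : ‖wT‖ ≤ R) (hwT : F wT - F wstar ≤ α)
    (Δhat : ℝ) (hΔhat : Δhat = 2 * L / μ + 2 * Real.sqrt (2 * α / μ))
    (c : ℝ) (hc : 0 < c)
    (ν : Measure (EuclideanSpace ℝ (Fin d)))
    (hν : ν = volume.withDensity
      (fun t => ENNReal.ofReal (c * Real.exp (-(ε / Δhat) * ‖t‖))))
    (hprob : IsProbabilityMeasure ν) :
    (∫ z, F (projBall R (wT + z)) ∂ν) - F wstar ≤
      2 * Real.sqrt 2 * (L ^ 2 / μ + L * Real.sqrt (2 * α / μ)) * ((d : ℝ) / ε) + α := by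
  haveI : Nontrivial (EuclideanSpace ℝ (Fin d)) :=
    Module.nontrivial_of_finrank_pos (R := ℝ) (by rw [finrank_euclideanSpace_fin]; omega)
  have hΔ0 : 0 < Δhat := by
    rw [hΔhat]; positivity
  set l : ℝ := ε / Δhat with hldef
  have hl : 0 < l := div_pos hε hΔ0
  set D : EuclideanSpace ℝ (Fin d) → ℝ := fun t => c * Real.exp (-l * ‖t‖) with hD
  have hD0 : ∀ t, 0 ≤ D t := fun t => by positivity
  have hDcont : Continuous D :=
    continuous_const.mul ((continuous_const.mul continuous_norm).rexp)
  -- total mass one (as a lower integral)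
  have h1 : ∫⁻ t : EuclideanSpace ℝ (Fin d), ENNReal.ofReal (D t) = 1 := by
    have := hprob.measure_univ
    rw [hν, withDensity_apply _ MeasurableSet.univ, setLIntegral_univ] at this
    exact this
  have hDint : Integrable D volume := by
    refine ⟨hDcont.aestronglyMeasurable, ?_⟩
    rw [hasFiniteIntegral_iff_norm]
    have : ∀ t, ENNReal.ofReal ‖D t‖ = ENNReal.ofReal (D t) := fun t => by
      rw [Real.norm_eq_abs, abs_of_nonneg (hD0 t)]
    simp_rw [this, h1]
    exact ENNReal.one_lt_top
  have hDvol : ∫ t, D t ∂(volume : Measure (EuclideanSpace ℝ (Fin d))) = 1 := by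
    rw [integral_eq_lintegral_of_nonneg_ae (Filter.Eventually.of_forall hD0)
      hDcont.aestronglyMeasurable, h1, ENNReal.toReal_one]
  -- integrability of the radial weight ‖x‖ · D x
  have hNint : Integrable (fun x : EuclideanSpace ℝ (Fin d) => ‖x‖ * D x) volume := by
    have hint2 : Integrable (fun x : EuclideanSpace ℝ (Fin d) => (2/l) * D ((2:ℝ)⁻¹ • x)) volume :=
      (hDint.comp_smul (by norm_num : ((2:ℝ)⁻¹) ≠ 0)).const_mul _
    refine Integrable.mono' hint2
      ((continuous_norm.mul hDcont).aestronglyMeasurable) (Filter.Eventually.of_forall fun x => ?_)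
    have hs : (0:ℝ) ≤ ‖x‖ := norm_nonneg x
    have hn : ‖(2:ℝ)⁻¹ • x‖ = 2⁻¹ * ‖x‖ := by
      rw [norm_smul, Real.norm_eq_abs]; norm_num
    have hexp : l/2 * ‖x‖ ≤ Real.exp (l/2 * ‖x‖) := by
      linarith [Real.add_one_le_exp (l/2 * ‖x‖)]
    have key : ‖x‖ ≤ (2/l) * Real.exp (l/2 * ‖x‖) := by
      rw [div_mul_eq_mul_div, le_div_iff₀ hl]
      linarith
    simp only [hD, Real.norm_eq_abs]
    rw [abs_of_nonneg (by positivity), hn]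
    calc ‖x‖ * (c * Real.exp (-l * ‖x‖))
        ≤ ((2/l) * Real.exp (l/2 * ‖x‖)) * (c * Real.exp (-l * ‖x‖)) := by
          apply mul_le_mul_of_nonneg_right key (by positivity)
      _ = (2/l) * (c * Real.exp (l/2 * ‖x‖ + -l * ‖x‖)) := by rw [Real.exp_add]; ring
      _ = (2/l) * (c * Real.exp (-l * (2⁻¹ * ‖x‖))) := by ring_nf
  -- value of the radial integral
  have hNval : ∫ x : EuclideanSpace ℝ (Fin d), ‖x‖ * D x = (d : ℝ) / l := by
    have hrad := MeasureTheory.integral_fun_norm_addHaar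
      (volume : Measure (EuclideanSpace ℝ (Fin d))) (fun r => r * (c * Real.exp (-l * r)))
    have hrad0 := MeasureTheory.integral_fun_norm_addHaar
      (volume : Measure (EuclideanSpace ℝ (Fin d))) (fun r => c * Real.exp (-l * r))
    rw [finrank_euclideanSpace_fin] at hrad hrad0
    set V : ℝ := ((volume : Measure (EuclideanSpace ℝ (Fin d))).real (Metric.ball 0 1))
    have hAB : ∫ y in Set.Ioi (0:ℝ), y ^ (d-1) • (y * (c * Real.exp (-l * y))) =
        ((d:ℝ)/l) * ∫ y in Set.Ioi (0:ℝ), y ^ (d-1) • (c * Real.exp (-l * y)) := by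
      have hdr : (0:ℝ) < d := by exact_mod_cast hd
      have hA : ∫ y in Set.Ioi (0:ℝ), y ^ (d-1) • (c * Real.exp (-l * y))
          = c * ((1/l) ^ (d:ℝ) * Real.Gamma d) := by
        rw [← Real.integral_rpow_mul_exp_neg_mul_Ioi hdr hl, ← integral_const_mul]
        refine setIntegral_congr_fun measurableSet_Ioi (fun y hy => ?_)
        have : y ^ ((d:ℝ) - 1) = y ^ (d - 1 : ℕ) := by
          rw [← Real.rpow_natCast y (d-1), Nat.cast_sub hd, Nat.cast_one]
        rw [smul_eq_mul, this]
        ring_nf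
      have hB : ∫ y in Set.Ioi (0:ℝ), y ^ (d-1) • (y * (c * Real.exp (-l * y)))
          = c * ((1/l) ^ ((d:ℝ)+1) * Real.Gamma ((d:ℝ)+1)) := by
        rw [← Real.integral_rpow_mul_exp_neg_mul_Ioi (by linarith : (0:ℝ) < (d:ℝ)+1) hl,
          ← integral_const_mul]
        refine setIntegral_congr_fun measurableSet_Ioi (fun y hy => ?_)
        have h1' : y ^ ((d:ℝ) + 1 - 1) = y ^ (d : ℕ) := by
          rw [add_sub_cancel_right, ← Real.rpow_natCast y d]
        have h2' : y ^ (d - 1 : ℕ) * y = y ^ (d : ℕ) := by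
          rw [← pow_succ, Nat.sub_add_cancel hd]
        rw [smul_eq_mul, h1', ← h2']
        ring_nf
      rw [hA, hB, Real.Gamma_add_one (by positivity),
        Real.rpow_add_one (by positivity : (1/l) ≠ 0)]
      field_simp
    rw [hrad, hAB, nsmul_eq_mul, smul_eq_mul]
    have hone : (1:ℝ) = (d:ℝ) * (V * ∫ y in Set.Ioi (0:ℝ),
        y ^ (d-1) • (c * Real.exp (-l * y))) := by
      rw [← hDvol, hrad0, nsmul_eq_mul, smul_eq_mul]
    linear_combination (-(d:ℝ)/l) * hone
  -- rewrite the measure with an ℝ≥0-valued density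
  have hν' : ν = volume.withDensity (fun t => ((D t).toNNReal : ENNReal)) := by
    rw [hν]; rfl
  have hfm : Measurable fun t : EuclideanSpace ℝ (Fin d) => (D t).toNNReal :=
    (continuous_real_toNNReal.comp hDcont).measurable
  -- integrability and value of ∫ ‖z‖ dν
  have hnormint : Integrable (fun z : EuclideanSpace ℝ (Fin d) => ‖z‖) ν := by
    rw [hν', integrable_withDensity_iff_integrable_smul hfm]
    refine hNint.congr (Filter.Eventually.of_forall fun x => ?_)
    simp [NNReal.smul_def, Real.coe_toNNReal _ (hD0 x), mul_comm]
  have hnormval : ∫ z, ‖z‖ ∂ν = (d : ℝ) / l := by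
    rw [hν', integral_withDensity_eq_integral_smul hfm, ← hNval]
    refine integral_congr_ae (Filter.Eventually.of_forall fun x => ?_)
    simp [NNReal.smul_def, Real.coe_toNNReal _ (hD0 x), mul_comm]
  -- continuity of F
  have hFcont : Continuous F := by
    have hg : Continuous fun w : EuclideanSpace ℝ (Fin d) => F w - μ / 2 * ‖w‖ ^ 2 :=
      hsconv.locallyLipschitz.continuous
    have : F = fun w => (F w - μ / 2 * ‖w‖ ^ 2) + μ / 2 * ‖w‖ ^ 2 := by
      funext w; ring
    rw [this]
    exact hg.add (continuous_const.mul (continuous_norm.pow 2))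
  haveI := hprob
  -- pointwise bound
  have hpt : ∀ z : EuclideanSpace ℝ (Fin d),
      F (projBall R (wT + z)) ≤ F wT + L * ‖z‖ := by
    intro z
    set p := projBall R (wT + z) with hp
    have hpB : ‖p‖ ≤ R := projBall_norm_le hR.le (wT + z)
    have habs := hLip p (mem_closedBall_zero_iff.2 hpB) wT (mem_closedBall_zero_iff.2 hwTB)
    have hle : ‖p - wT‖ ≤ ‖z‖ := by
      have := projBall_dist_le hR.le (wT + z) wT hwTB
      simpa [add_sub_cancel_left] using this
    have := (abs_le.1 habs).2
    nlinarith [mul_le_mul_of_nonneg_left hle hL.le]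
  -- integrability of the composed objective
  have hmeas : Measurable fun z : EuclideanSpace ℝ (Fin d) => F (projBall R (wT + z)) :=
    hFcont.measurable.comp (measurable_projBall.comp (measurable_id.const_add wT))
  have hint1 : Integrable (fun z : EuclideanSpace ℝ (Fin d) => F (projBall R (wT + z))) ν := by
    refine Integrable.mono' (integrable_const (|F wT| + L * (2 * R)))
      hmeas.aestronglyMeasurable (Filter.Eventually.of_forall fun z => ?_)
    set p := projBall R (wT + z) with hp
    have hpB : ‖p‖ ≤ R := projBall_norm_le hR.le (wT + z)
    have habs := hLip p (mem_closedBall_zero_iff.2 hpB) wT (mem_closedBall_zero_iff.2 hwTB)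
    have hdist : ‖p - wT‖ ≤ 2 * R := by
      calc ‖p - wT‖ ≤ ‖p‖ + ‖wT‖ := norm_sub_le _ _
        _ ≤ 2 * R := by linarith
    have h2 := abs_le.1 habs
    have h3 : L * ‖p - wT‖ ≤ L * (2 * R) := mul_le_mul_of_nonneg_left hdist hL.le
    rw [Real.norm_eq_abs, abs_le]
    constructor
    · have := abs_le.1 (abs_abs (F wT) ▸ le_refl |F wT|)
      nlinarith [neg_abs_le (F wT), le_abs_self (F wT)]
    · nlinarith [neg_abs_le (F wT), le_abs_self (F wT)]
  have hint2 : Integrable (fun z : EuclideanSpace ℝ (Fin d) => F wT + L * ‖z‖) ν :=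
    (integrable_const _).add (hnormint.const_mul L)
  -- putting it together
  have hmono : ∫ z, F (projBall R (wT + z)) ∂ν ≤ ∫ z, (F wT + L * ‖z‖) ∂ν :=
    integral_mono hint1 hint2 hpt
  have hval : ∫ z, (F wT + L * ‖z‖) ∂ν = F wT + L * ((d : ℝ) / l) := by
    rw [integral_add (integrable_const _) (hnormint.const_mul L), integral_const,
      integral_const_mul, hnormval]
    simp
  have hdl : (d : ℝ) / l = (d : ℝ) * Δhat / ε := by
    rw [hldef, div_div_eq_mul_div]
  have hS : 0 ≤ L ^ 2 / μ + L * Real.sqrt (2 * α / μ) :=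
    add_nonneg (div_nonneg (sq_nonneg L) hμ.le) (mul_nonneg hL.le (Real.sqrt_nonneg _))
  have hsqrt2 : 1 ≤ Real.sqrt 2 := by
    rw [show (1:ℝ) = Real.sqrt 1 by simp]
    exact Real.sqrt_le_sqrt (by norm_num)
  have hkey : L * ((d : ℝ) * Δhat / ε) =
      2 * (L ^ 2 / μ + L * Real.sqrt (2 * α / μ)) * ((d : ℝ) / ε) := by
    rw [hΔhat]; ring
  have hde : 0 ≤ (d : ℝ) / ε := div_nonneg (Nat.cast_nonneg d) hε.le
  have hfinal : L * ((d : ℝ) / l) ≤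
      2 * Real.sqrt 2 * (L ^ 2 / μ + L * Real.sqrt (2 * α / μ)) * ((d : ℝ) / ε) := by
    rw [hdl, hkey]
    nlinarith [mul_nonneg hS hde]
  rw [hval] at hmono
  linarith
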